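/- For all real s ≥ 0, the pair (x, y) with x = exp(a(s)) and y = exp(b(s)), where cosh(2a(s)) = (s² + 3s + 3)/(2(s+1)) and cosh(b(s)) = (s⁴ + 5s³ + 7s² + 4s + 2)/(2(s+1)²) with a(s), b(s) ≥ 0, satisfies y + y⁻¹ − (x⁴ + x⁻⁴) + x² + x⁻² + 2 = 0. -/
import Mathlib


noncomputable def figure8A (x y : ℝ) : ℝ :=
  y + y⁻¹ - (x ^ 4 + (x ^ 4)⁻¹) + x ^ 2 + (x ^ 2)⁻¹ + 2

theorem stmt_4 (s a b : ℝ) (hs : 0 ≤ s) (ha : 0 ≤ a) (hb : 0 ≤ b)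
    (hca : Real.cosh (2 * a) = (s ^ 2 + 3 * s + 3) / (2 * (s + 1)))
    (hcb : Real.cosh b = (s ^ 4 + 5 * s ^ 3 + 7 * s ^ 2 + 4 * s + 2) / (2 * (s + 1) ^ 2)) :
    figure8A (Real.exp a) (Real.exp b) = 0 := by
  have h1 : s + 1 ≠ 0 := by positivity
  have hx4 : Real.exp a ^ 4 = Real.exp (4 * a) := by
    rw [← Real.exp_nat_mul]; norm_num
  have hx2 : Real.exp a ^ 2 = Real.exp (2 * a) := by
    rw [← Real.exp_nat_mul]; norm_num
  have key : ∀ t : ℝ, Real.exp t + (Real.exp t)⁻¹ = 2 * Real.cosh t := by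
    intro t
    rw [← Real.exp_neg, Real.cosh_eq]; ring
  have h4a : Real.cosh (4 * a) = 2 * Real.cosh (2 * a) ^ 2 - 1 := by
    have h := Real.cosh_two_mul (2 * a)
    have h2 := Real.sinh_sq (2 * a)
    rw [show 2 * (2 * a) = 4 * a by ring] at h
    rw [h, h2]; ring
  have hval : 2 * Real.cosh b - 2 * Real.cosh (4 * a) + 2 * Real.cosh (2 * a) + 2 = 0 := by
    rw [h4a, hca, hcb]
    field_simp
    ring
  unfold figure8A
  rw [hx4, hx2]
  linarith [key b, key (4 * a), key (2 * a)]
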